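/- arXiv:2010.10631 — 5 statements merged into one kernel-verified Lean document; each statement's English description precedes it below -/
import Mathlib

section
/- Let N be a positive integer, let (ι, 𝒜, μ) be a probability space, and let P : ι → Matrix (Fin N) (Fin N) ℝ be a measurable family of matrices such that for every s ∈ ι, P s is symmetric and idempotent (an orthogonal projection matrix), and s ↦ P s is Bochner integrable with respect to μ. Set Q = ∫ P s ∂μ(s). Then Q is symmetric positive semidefinite, and for every vector e ∈ ℝ^N, ∫ ‖(P s) e‖² ∂μ(s) = ⟨e, Q e⟩ = ‖Q^{1/2} e‖², where Q^{1/2} denotes the positive semidefinite square root of Q. -/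
/-!
Since each `P s` is a symmetric idempotent, `‖P s e‖² = ⟨e, (P s)ᵀ P s e⟩ = ⟨e, P s e⟩`. The quadratic
form `⟨e, A e⟩` is a finite linear combination of the entries of `A`, so it commutes with the entrywise
integral and `∫ ‖P s e‖² ∂μ = ⟨e, Q e⟩`; this is nonnegative, whence `Q ⪰ 0`. Finally, for a symmetric
`W` with `W² = Q`, `⟨e, Q e⟩ = ⟨e, Wᵀ W e⟩ = ‖W e‖²`.
-/

open MeasureTheory Matrix

namespace Matrix

variable {m n R : Type*} [Fintype m] [Fintype n]

theorem mulVec_dotProduct_mulVec_self [CommSemiring R] (A : Matrix m n R) (v : n → R) :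
    A *ᵥ v ⬝ᵥ A *ᵥ v = v ⬝ᵥ (Aᵀ * A) *ᵥ v := by
  rw [← mulVec_mulVec, dotProduct_mulVec v, vecMul_transpose]

theorem IsSymm.mulVec_dotProduct_mulVec_self_of_mul_self [CommSemiring R] {A B : Matrix n n R}
    (hA : A.IsSymm) (hAA : A * A = B) (v : n → R) : A *ᵥ v ⬝ᵥ A *ᵥ v = v ⬝ᵥ B *ᵥ v := by
  rw [mulVec_dotProduct_mulVec_self, hA.eq, hAA]

variable {𝕜 ι : Type*} [RCLike 𝕜] [MeasurableSpace ι] {μ : Measure ι}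

theorem integral_dotProduct (f : ι → n → 𝕜) (hf : ∀ i, Integrable (fun s => f s i) μ)
    (v : n → 𝕜) : ∫ s, v ⬝ᵥ f s ∂μ = v ⬝ᵥ fun i => ∫ s, f s i ∂μ := by
  simp only [dotProduct]
  rw [integral_finsetSum _ fun i _ => (hf i).const_mul (v i)]
  simp only [integral_const_mul]

theorem integral_dotProduct_mulVec (A : ι → Matrix m n 𝕜)
    (hA : ∀ i j, Integrable (fun s => A s i j) μ) (v : m → 𝕜) (w : n → 𝕜) :
    ∫ s, v ⬝ᵥ A s *ᵥ w ∂μ = v ⬝ᵥ (of fun i j => ∫ s, A s i j ∂μ) *ᵥ w := by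
  have hrow : ∀ i, Integrable (fun s => (A s *ᵥ w) i) μ := fun i =>
    integrable_finsetSum _ fun j _ => (hA i j).mul_const (w j)
  rw [integral_dotProduct _ hrow]
  congr 1
  ext i
  simp only [mulVec, dotProduct, of_apply]
  rw [integral_finsetSum _ fun j _ => (hA i j).mul_const (w j)]
  simp only [integral_mul_const]

end Matrix

theorem ensemble_projection_weighted_mse_general
    {N : ℕ} {ι : Type*} [MeasurableSpace ι]
    (μ : Measure ι)
    (P : ι → Matrix (Fin N) (Fin N) ℝ)
    (hPsymm : ∀ s, (P s).IsSymm)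
    (hPidem : ∀ s, P s * P s = P s)
    (hPint : ∀ i j, Integrable (fun s => P s i j) μ)
    (Q : Matrix (Fin N) (Fin N) ℝ)
    (hQ : ∀ i j, Q i j = ∫ s, P s i j ∂μ) :
    Q.PosSemidef ∧
      ∀ e : Fin N → ℝ,
        (∫ s, ((P s).mulVec e) ⬝ᵥ ((P s).mulVec e) ∂μ) = e ⬝ᵥ Q.mulVec e ∧
        ∀ W : Matrix (Fin N) (Fin N) ℝ, W.PosSemidef → W * W = Q →
          e ⬝ᵥ Q.mulVec e = (W.mulVec e) ⬝ᵥ (W.mulVec e) := by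
  obtain rfl : Q = of fun i j => ∫ s, P s i j ∂μ := ext hQ
  have hmse (e : Fin N → ℝ) :
      ∫ s, P s *ᵥ e ⬝ᵥ P s *ᵥ e ∂μ = e ⬝ᵥ (of fun i j => ∫ s, P s i j ∂μ) *ᵥ e := by
    simp only [(hPsymm _).mulVec_dotProduct_mulVec_self_of_mul_self (hPidem _)]
    exact integral_dotProduct_mulVec P hPint e e
  have hQsymm : (of fun i j => ∫ s, P s i j ∂μ).IsSymm :=
    IsSymm.ext fun i j => by simp only [of_apply, (hPsymm _).apply]
  refine ⟨.of_dotProduct_mulVec_nonneg (isHermitian_iff_isSymm.mpr hQsymm) fun e => ?_,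
    fun e => ⟨hmse e, fun W hW hWQ => ?_⟩⟩
  · rw [star_trivial, ← hmse]
    refine integral_nonneg fun s => show 0 ≤ P s *ᵥ e ⬝ᵥ P s *ᵥ e from ?_
    simpa only [star_trivial] using dotProduct_self_star_nonneg (P s *ᵥ e)
  · exact ((isHermitian_iff_isSymm.mp hW.1).mulVec_dotProduct_mulVec_self_of_mul_self hWQ e).symm

/-- **Lemma 1 (ENSURE paper).** Let `(ι, μ)` be a probability space and
`P : ι → Matrix (Fin N) (Fin N) ℝ` a measurable, integrable family of orthogonal projection
matrices (symmetric and idempotent).  Let `Q = ∫ P s ∂μ` (entrywise Bochner integral).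
Then `Q` is symmetric positive semidefinite and, for every `e : ℝ^N`,
`∫ ‖P s e‖² ∂μ = ⟨e, Q e⟩ = ‖W e‖²` where `W` is the positive semidefinite square root
of `Q` (i.e. `W` is PSD with `W * W = Q`). -/
theorem ensemble_projection_weighted_mse
    {N : ℕ} (hN : 0 < N) {ι : Type*} [MeasurableSpace ι]
    (μ : Measure ι) [IsProbabilityMeasure μ]
    (P : ι → Matrix (Fin N) (Fin N) ℝ)
    (hPmeas : ∀ i j, Measurable (fun s => P s i j))
    (hPsymm : ∀ s, (P s).IsSymm)
    (hPidem : ∀ s, P s * P s = P s)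
    (hPint : ∀ i j, Integrable (fun s => P s i j) μ)
    (Q : Matrix (Fin N) (Fin N) ℝ)
    (hQ : ∀ i j, Q i j = ∫ s, P s i j ∂μ) :
    Q.PosSemidef ∧
      ∀ e : Fin N → ℝ,
        (∫ s, ((P s).mulVec e) ⬝ᵥ ((P s).mulVec e) ∂μ) = e ⬝ᵥ Q.mulVec e ∧
        ∀ W : Matrix (Fin N) (Fin N) ℝ, W.PosSemidef → W * W = Q →
          e ⬝ᵥ Q.mulVec e = (W.mulVec e) ⬝ᵥ (W.mulVec e) :=
  ensemble_projection_weighted_mse_general μ P hPsymm hPidem hPint Q hQ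
end

section
/- Let N be a positive integer, F ∈ Matrix (Fin N) (Fin N) ℂ a unitary matrix, and d : Fin N → ℝ with 0 < d i ≤ 1 for all i. Let m : Ω → Fin N → ℝ be a random vector on a probability space whose entries take values in {0,1} and satisfy 𝔼[m i] = d i for each i. For each outcome define the weighted projection matrix R(m) = Fᴴ · diag(m i / √(d i)) · F. Then for every fixed vector e ∈ ℂ^N, 𝔼[‖R(m) e‖²] = ‖e‖². -/
open MeasureTheory Matrix

lemma starDot_eq_sum_normsq {N : ℕ} (w : Fin N → ℂ) :
    star w ⬝ᵥ w = ((∑ i, ‖w i‖ ^ 2 : ℝ) : ℂ) := by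
  push_cast
  simp only [dotProduct, Pi.star_apply, RCLike.star_def]
  congr 1; ext i
  rw [Complex.conj_mul']

lemma sum_normsq_mulVec {N : ℕ} (A : Matrix (Fin N) (Fin N) ℂ) (hA : Aᴴ * A = 1)
    (v : Fin N → ℂ) :
    ∑ i, ‖(A.mulVec v) i‖ ^ 2 = ∑ i, ‖v i‖ ^ 2 := by
  have h : star (A.mulVec v) ⬝ᵥ (A.mulVec v) = star v ⬝ᵥ v := by
    rw [Matrix.star_mulVec, Matrix.dotProduct_mulVec, Matrix.vecMul_vecMul, hA,
      Matrix.vecMul_one]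
  rw [starDot_eq_sum_normsq, starDot_eq_sum_normsq] at h
  exact_mod_cast h

/-- **ENSURE weighted projected loss equals the true MSE (single-channel MRI case).**
Let `F` be an `N × N` unitary matrix and `d : Fin N → ℝ` with `0 < d i ≤ 1`.  Let `m` be a
random vector with entries in `{0,1}` and `𝔼[m i] = d i`.  For each outcome define the
weighted projection `R(m) = Fᴴ diag(m i / √(d i)) F`.  Then for every fixed `e ∈ ℂ^N`,
`𝔼[‖R(m) e‖²] = ‖e‖²` (squared Euclidean norms). -/
theorem ensure_weighted_projected_loss_eq_mse
    {N : ℕ} (hN : 0 < N)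
    (F : Matrix (Fin N) (Fin N) ℂ)
    (hF₁ : Fᴴ * F = 1) (hF₂ : F * Fᴴ = 1)
    (d : Fin N → ℝ) (hd : ∀ i, 0 < d i ∧ d i ≤ 1)
    {Ω : Type*} [MeasurableSpace Ω] (Pr : Measure Ω) [IsProbabilityMeasure Pr]
    (m : Ω → Fin N → ℝ)
    (hm01 : ∀ ω i, m ω i = 0 ∨ m ω i = 1)
    (hmmeas : ∀ i, Measurable (fun ω => m ω i))
    (hmean : ∀ i, ∫ ω, m ω i ∂Pr = d i)
    (e : Fin N → ℂ) :
    ∫ ω, ∑ i, ‖((Fᴴ * Matrix.diagonal (fun k => ((m ω k / Real.sqrt (d k) : ℝ) : ℂ)) * F).mulVec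
        e) i‖ ^ 2 ∂Pr
      = ∑ i, ‖e i‖ ^ 2 := by
  set y := F.mulVec e with hy
  have hFH : (Fᴴ)ᴴ * Fᴴ = 1 := by rwa [conjTranspose_conjTranspose]
  -- pointwise simplification of the integrand
  have hpt : ∀ ω, (∑ i, ‖((Fᴴ * Matrix.diagonal
        (fun k => ((m ω k / Real.sqrt (d k) : ℝ) : ℂ)) * F).mulVec e) i‖ ^ 2)
      = ∑ i, m ω i * (‖y i‖ ^ 2 / d i) := by
    intro ω
    have hvec : (Fᴴ * Matrix.diagonal (fun k => ((m ω k / Real.sqrt (d k) : ℝ) : ℂ)) * F).mulVec e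
        = Fᴴ.mulVec (fun i => ((m ω i / Real.sqrt (d i) : ℝ) : ℂ) * y i) := by
      rw [← Matrix.mulVec_mulVec, ← Matrix.mulVec_mulVec]
      refine congrArg _ ?_
      funext i
      rw [Matrix.mulVec_diagonal]
    rw [hvec, sum_normsq_mulVec _ hFH]
    congr 1; ext i
    have hdi := (hd i).1
    have hsq : Real.sqrt (d i) ^ 2 = d i := Real.sq_sqrt hdi.le
    rcases hm01 ω i with h | h
    · simp [h]
    · simp only [h, norm_mul, Complex.norm_real, mul_pow, one_mul]
      rw [Real.norm_eq_abs, sq_abs, div_pow, one_pow, hsq]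
      ring
  simp only [hpt]
  -- integrability of each summand
  have hint : ∀ i : Fin N, Integrable (fun ω => m ω i * (‖y i‖ ^ 2 / d i)) Pr := by
    intro i
    refine (Integrable.mono' (integrable_const 1) ((hmmeas i).aestronglyMeasurable)
      (ae_of_all _ fun ω => ?_)).mul_const _
    rcases hm01 ω i with h | h <;> simp [h]
  rw [integral_finset_sum _ fun i _ => hint i]
  have hmain : ∀ i : Fin N, (∫ ω, m ω i * (‖y i‖ ^ 2 / d i) ∂Pr) = ‖y i‖ ^ 2 := by
    intro i
    rw [integral_mul_const, hmean i]
    field_simp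
    rw [mul_comm]
    exact mul_div_cancel_right₀ _ (hd i).1.ne'
  simp only [hmain]
  exact sum_normsq_mulVec F hF₁ e
end

section
/- Let N be a positive integer, F ∈ Matrix (Fin N) (Fin N) ℂ a unitary matrix, and c ∈ ℝ with 0 < c ≤ 1. Let m : Ω → Fin N → ℝ be a random vector on a probability space whose entries take values in {0,1} and satisfy 𝔼[m i] = c for each i (uniform sampling density). Then for every fixed vector e ∈ ℂ^N, 𝔼[‖(Fᴴ · diag(m) · F) e‖²] = c · ‖e‖². -/
open MeasureTheory Matrix

/-!
Since `Fᴴ` is an isometry, `‖Fᴴ diag(m) F e‖² = ∑ i, m i ‖(F e) i‖²` (a 0/1 mask satisfies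
`m i ^ 2 = m i`). Taking expectations replaces each `m i` by `c`, leaving `c ‖F e‖² = c ‖e‖²`.
-/

namespace Matrix

variable {ι 𝕜 : Type*} [Fintype ι] [RCLike 𝕜]

lemma sum_norm_sq_eq_re_star_dotProduct (x : ι → 𝕜) :
    ∑ i, ‖x i‖ ^ 2 = RCLike.re (star x ⬝ᵥ x) := by
  simp only [dotProduct, Pi.star_apply, map_sum, RCLike.star_def, RCLike.conj_mul,
    ← RCLike.ofReal_pow, RCLike.ofReal_re]

lemma sum_norm_sq_mulVec_of_conjTranspose_mul_self [DecidableEq ι] {A : Matrix ι ι 𝕜}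
    (hA : Aᴴ * A = 1) (x : ι → 𝕜) : ∑ i, ‖(A *ᵥ x) i‖ ^ 2 = ∑ i, ‖x i‖ ^ 2 := by
  rw [sum_norm_sq_eq_re_star_dotProduct, sum_norm_sq_eq_re_star_dotProduct x, star_mulVec,
    dotProduct_mulVec, vecMul_vecMul, hA, vecMul_one]

lemma sum_norm_sq_conjTranspose_mul_diagonal_mul_mulVec [DecidableEq ι] {F : Matrix ι ι 𝕜}
    (hF : F * Fᴴ = 1) (d : ι → 𝕜) (x : ι → 𝕜) :
    ∑ i, ‖((Fᴴ * diagonal d * F) *ᵥ x) i‖ ^ 2 = ∑ i, ‖d i‖ ^ 2 * ‖(F *ᵥ x) i‖ ^ 2 := by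
  have hF' : Fᴴᴴ * Fᴴ = 1 := by rwa [conjTranspose_conjTranspose]
  rw [← mulVec_mulVec, ← mulVec_mulVec, sum_norm_sq_mulVec_of_conjTranspose_mul_self hF']
  simp only [mulVec_diagonal, norm_mul, mul_pow]

end Matrix

lemma integral_sum_mul_const_of_mem_zero_one {Ω ι : Type*} [Fintype ι] [MeasurableSpace Ω]
    {μ : Measure Ω} [IsFiniteMeasure μ] {m : Ω → ι → ℝ}
    (hm01 : ∀ ω i, m ω i = 0 ∨ m ω i = 1) (hmeas : ∀ i, Measurable (fun ω => m ω i))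
    (a : ι → ℝ) : ∫ ω, ∑ i, m ω i * a i ∂μ = ∑ i, (∫ ω, m ω i ∂μ) * a i := by
  have hint (i : ι) : Integrable (fun ω => m ω i) μ :=
    .of_bound (hmeas i).aestronglyMeasurable 1 <| .of_forall fun ω => by
      rcases hm01 ω i with h | h <;> simp [h]
  rw [integral_finsetSum _ fun i _ => (hint i).mul_const _]
  simp only [integral_mul_const]

theorem ensemble_projected_loss_uniform_density_general
    {N : ℕ}
    (F : Matrix (Fin N) (Fin N) ℂ)
    (hF₁ : Fᴴ * F = 1) (hF₂ : F * Fᴴ = 1)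
    (c : ℝ)
    {Ω : Type*} [MeasurableSpace Ω] (Pr : Measure Ω) [IsProbabilityMeasure Pr]
    (m : Ω → Fin N → ℝ)
    (hm01 : ∀ ω i, m ω i = 0 ∨ m ω i = 1)
    (hmmeas : ∀ i, Measurable (fun ω => m ω i))
    (hmean : ∀ i, ∫ ω, m ω i ∂Pr = c)
    (e : Fin N → ℂ) :
    ∫ ω, ∑ i, ‖((Fᴴ * Matrix.diagonal (fun k => (m ω k : ℂ)) * F).mulVec e) i‖ ^ 2 ∂Pr
      = c * ∑ i, ‖e i‖ ^ 2 := by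
  have hmask (ω : Ω) (i : Fin N) : ‖(m ω i : ℂ)‖ ^ 2 = m ω i := by
    rcases hm01 ω i with h | h <;> simp [h]
  simp_rw [sum_norm_sq_conjTranspose_mul_diagonal_mul_mulVec hF₂, hmask]
  rw [integral_sum_mul_const_of_mem_zero_one hm01 hmmeas,
    ← sum_norm_sq_mulVec_of_conjTranspose_mul_self hF₁ e, Finset.mul_sum]
  simp only [hmean]

/-- **Uniform sampling density: the ensemble projected loss is proportional to the MSE.**
Let `F` be an `N × N` unitary matrix and `0 < c ≤ 1`.  Let `m` be a random vector with
entries in `{0,1}` and `𝔼[m i] = c` for every `i`.  Then for every fixed `e ∈ ℂ^N`,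
`𝔼[‖(Fᴴ diag(m) F) e‖²] = c ‖e‖²` (squared Euclidean norms). -/
theorem ensemble_projected_loss_uniform_density
    {N : ℕ} (hN : 0 < N)
    (F : Matrix (Fin N) (Fin N) ℂ)
    (hF₁ : Fᴴ * F = 1) (hF₂ : F * Fᴴ = 1)
    (c : ℝ) (hc : 0 < c) (hc1 : c ≤ 1)
    {Ω : Type*} [MeasurableSpace Ω] (Pr : Measure Ω) [IsProbabilityMeasure Pr]
    (m : Ω → Fin N → ℝ)
    (hm01 : ∀ ω i, m ω i = 0 ∨ m ω i = 1)
    (hmmeas : ∀ i, Measurable (fun ω => m ω i))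
    (hmean : ∀ i, ∫ ω, m ω i ∂Pr = c)
    (e : Fin N → ℂ) :
    ∫ ω, ∑ i, ‖((Fᴴ * Matrix.diagonal (fun k => (m ω k : ℂ)) * F).mulVec e) i‖ ^ 2 ∂Pr
      = c * ∑ i, ‖e i‖ ^ 2 :=
  ensemble_projected_loss_uniform_density_general F hF₁ hF₂ c Pr m hm01 hmmeas hmean e
end

section
/- Let N be a positive integer, M ∈ Matrix (Fin N) (Fin N) ℝ symmetric positive definite, and ρ ∈ ℝ^N. Let p : ℝ^N → ℝ be the Gaussian density with mean M ρ and covariance M, i.e., p(u) = ((2π)^N det M)^{-1/2} exp(−(1/2)⟨u − Mρ, M⁻¹(u − Mρ)⟩), with respect to Lebesgue measure on the Euclidean space ℝ^N. Let g : ℝ^N → ℝ^N be continuously differentiable with compact support. Then ∫ ⟨g(u), ρ⟩ p(u) du = ∫ ⟨g(u), M⁻¹ u⟩ p(u) du − ∫ (div g)(u) p(u) du. -/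
open MeasureTheory Matrix

/-!
Integrate by parts coordinatewise against the Gaussian density `p`: as `g` has compact support,
`∫ (div g) p = -∫ ⟨g, ∇p⟩`, and `∇p(u) = -M⁻¹ (u - M ρ) p(u) = -(M⁻¹ u - ρ) p(u)`.
-/

/-- The divergence of a map `g : ℝ^N → ℝ^N` at `u`: the trace of the Fréchet derivative. -/
noncomputable def divergence {N : ℕ} (g : (Fin N → ℝ) → (Fin N → ℝ)) (u : Fin N → ℝ) : ℝ :=
  LinearMap.trace ℝ (Fin N → ℝ) (fderiv ℝ g u).toLinearMap

/-- The Gaussian density on `ℝ^N` with mean `M ρ` and covariance `M`, with respect to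
Lebesgue measure:
`p(u) = ((2π)^N det M)^{-1/2} exp(−(1/2)⟨u − Mρ, M⁻¹(u − Mρ)⟩)`. -/
noncomputable def gaussDensity {N : ℕ} (M : Matrix (Fin N) (Fin N) ℝ) (ρ : Fin N → ℝ)
    (u : Fin N → ℝ) : ℝ :=
  ((2 * Real.pi) ^ N * M.det) ^ (-(1 : ℝ) / 2) *
    Real.exp (-(1 / 2) * ((u - M.mulVec ρ) ⬝ᵥ (M⁻¹.mulVec (u - M.mulVec ρ))))

section IntegrationByParts

variable {E : Type*} [NormedAddCommGroup E] [NormedSpace ℝ E] [MeasurableSpace E]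
  [BorelSpace E] {μ : Measure E} {f p : E → ℝ}

theorem integrable_fderiv_apply_mul [IsFiniteMeasureOnCompacts μ] (hf : ContDiff ℝ 1 f)
    (hfs : HasCompactSupport f) (hp : Continuous p) (v : E) :
    Integrable (fun x => fderiv ℝ f x v * p x) μ :=
  Continuous.integrable_of_hasCompactSupport
    (((hf.continuous_fderiv one_ne_zero).clm_apply continuous_const).mul hp)
    (hfs.fderiv_apply ℝ v).mul_right

theorem integrable_mul_fderiv_apply [IsFiniteMeasureOnCompacts μ] (hf : Continuous f)
    (hfs : HasCompactSupport f) (hp : ContDiff ℝ 1 p) (v : E) :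
    Integrable (fun x => f x * fderiv ℝ p x v) μ :=
  Continuous.integrable_of_hasCompactSupport
    (hf.mul ((hp.continuous_fderiv one_ne_zero).clm_apply continuous_const)) hfs.mul_right

theorem integral_fderiv_mul_eq_neg_integral_mul_fderiv [FiniteDimensional ℝ E]
    [μ.IsAddHaarMeasure] (hf : ContDiff ℝ 1 f) (hfs : HasCompactSupport f) (hp : ContDiff ℝ 1 p)
    (v : E) :
    ∫ x, fderiv ℝ f x v * p x ∂μ = -∫ x, f x * fderiv ℝ p x v ∂μ := by
  rw [integral_mul_fderiv_eq_neg_fderiv_mul_of_integrable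
    (integrable_fderiv_apply_mul hf hfs hp.continuous v)
    (integrable_mul_fderiv_apply hf.continuous hfs hp v)
    ((hf.continuous.mul hp.continuous).integrable_of_hasCompactSupport hfs.mul_right)
    (fun x _ => hf.differentiable one_ne_zero x) (fun x _ => hp.differentiable one_ne_zero x),
    neg_neg]

end IntegrationByParts

section Divergence

variable {N : ℕ}

theorem divergence_eq_sum (g : (Fin N → ℝ) → Fin N → ℝ) (u : Fin N → ℝ) :
    divergence g u = ∑ i, fderiv ℝ g u (Pi.single i 1) i := by
  simp [divergence, LinearMap.trace_eq_matrix_trace ℝ (Pi.basisFun ℝ (Fin N)), Matrix.trace]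

theorem integral_divergence_mul_eq_neg {g : (Fin N → ℝ) → Fin N → ℝ} (hg : ContDiff ℝ 1 g)
    (hgs : HasCompactSupport g) {p : (Fin N → ℝ) → ℝ} (hp : ContDiff ℝ 1 p) :
    ∫ u, divergence g u * p u = -∫ u, ∑ i, g u i * fderiv ℝ p u (Pi.single i 1) := by
  have hgi : ∀ i, ContDiff ℝ 1 (g · i) := contDiff_pi.1 hg
  have hgsi : ∀ i, HasCompactSupport (g · i) := fun i =>
    hgs.comp_left (g := fun v : Fin N → ℝ => v i) rfl
  have hcoord : ∀ u i, fderiv ℝ g u (Pi.single i 1) i = fderiv ℝ (g · i) u (Pi.single i 1) :=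
    fun u i => by rw [fderiv_apply (hg.differentiable one_ne_zero u)]; rfl
  simp_rw [divergence_eq_sum, hcoord, Finset.sum_mul]
  rw [integral_finsetSum, integral_finsetSum, ← Finset.sum_neg_distrib]
  · exact Finset.sum_congr rfl fun i _ =>
      integral_fderiv_mul_eq_neg_integral_mul_fderiv (hgi i) (hgsi i) hp _
  · exact fun i _ => integrable_mul_fderiv_apply (hgi i).continuous (hgsi i) hp _
  · exact fun i _ => integrable_fderiv_apply_mul (hgi i) (hgsi i) hp.continuous _

end Divergence

section QuadraticForm

variable {n : Type*} [Fintype n] {A : Matrix n n ℝ}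

noncomputable def Matrix.toContinuousLinearMap₂' [DecidableEq n] (A : Matrix n n ℝ) :
    (n → ℝ) →L[ℝ] (n → ℝ) →L[ℝ] ℝ :=
  LinearMap.toContinuousLinearMap
    (LinearMap.toContinuousLinearMap.toLinearMap ∘ₗ Matrix.toLinearMap₂' ℝ A)

@[simp]
theorem Matrix.toContinuousLinearMap₂'_apply [DecidableEq n] (A : Matrix n n ℝ)
    (x y : n → ℝ) :
    A.toContinuousLinearMap₂' x y = x ⬝ᵥ A *ᵥ y :=
  Matrix.toLinearMap₂'_apply' A x y

theorem Matrix.IsSymm.dotProduct_mulVec_comm (hA : A.IsSymm) (x y : n → ℝ) :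
    x ⬝ᵥ A *ᵥ y = y ⬝ᵥ A *ᵥ x := by
  rw [dotProduct_mulVec, ← mulVec_transpose, hA.eq, dotProduct_comm]

theorem Matrix.IsSymm.hasFDerivAt_quadForm_sub [DecidableEq n] (hA : A.IsSymm) (m u : n → ℝ) :
    HasFDerivAt (fun u => (u - m) ⬝ᵥ A *ᵥ (u - m))
      ((2 : ℝ) • A.toContinuousLinearMap₂' (u - m)) u := by
  have hsub := (hasFDerivAt_id (𝕜 := ℝ) u).sub_const m
  have hq := A.toContinuousLinearMap₂'.hasFDerivAt_of_bilinear hsub hsub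
  simp only [Matrix.toContinuousLinearMap₂'_apply, id] at hq
  refine hq.congr_fderiv ?_
  ext v
  simp [hA.dotProduct_mulVec_comm v, two_mul]

end QuadraticForm

section Gaussian

variable {N : ℕ}

theorem contDiff_gaussDensity (M : Matrix (Fin N) (Fin N) ℝ) (ρ : Fin N → ℝ)
    {k : WithTop ℕ∞} : ContDiff ℝ k (gaussDensity M ρ) := by
  unfold gaussDensity
  simp only [dotProduct, mulVec]
  fun_prop

theorem Matrix.IsSymm.hasFDerivAt_gaussDensity {M : Matrix (Fin N) (Fin N) ℝ} (hM : M.IsSymm)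
    (ρ u : Fin N → ℝ) :
    HasFDerivAt (gaussDensity M ρ)
      (-gaussDensity M ρ u • M⁻¹.toContinuousLinearMap₂' (u - M *ᵥ ρ)) u := by
  have := ((hM.inv.hasFDerivAt_quadForm_sub (M *ᵥ ρ) u).const_mul (-(1 / 2) : ℝ)).exp.const_mul
    (((2 * Real.pi) ^ N * M.det) ^ (-(1 : ℝ) / 2))
  refine this.congr_fderiv ?_
  rw [gaussDensity]
  module

theorem Matrix.IsSymm.fderiv_gaussDensity_single {M : Matrix (Fin N) (Fin N) ℝ} (hM : M.IsSymm)
    (ρ u : Fin N → ℝ) (i : Fin N) :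
    fderiv ℝ (gaussDensity M ρ) u (Pi.single i 1)
      = -(M⁻¹ *ᵥ (u - M *ᵥ ρ)) i * gaussDensity M ρ u := by
  rw [(hM.hasFDerivAt_gaussDensity ρ u).fderiv]
  simp only [_root_.smul_apply, Matrix.toContinuousLinearMap₂'_apply,
    hM.inv.dotProduct_mulVec_comm _ (Pi.single i 1), single_dotProduct, one_mul, smul_eq_mul]
  ring

end Gaussian

theorem generalized_stein_identity_general
    {N : ℕ}
    (M : Matrix (Fin N) (Fin N) ℝ) (hM : M.PosDef)
    (ρ : Fin N → ℝ)
    (g : (Fin N → ℝ) → (Fin N → ℝ))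
    (hg : ContDiff ℝ 1 g) (hgsupp : HasCompactSupport g) :
    ∫ u, (g u ⬝ᵥ ρ) * gaussDensity M ρ u
      = (∫ u, (g u ⬝ᵥ M⁻¹.mulVec u) * gaussDensity M ρ u)
        - ∫ u, divergence g u * gaussDensity M ρ u := by
  have hMsymm : M.IsSymm := isHermitian_iff_isSymm.1 hM.1
  have hMρ : M⁻¹ *ᵥ (M *ᵥ ρ) = ρ := by
    rw [mulVec_mulVec, nonsing_inv_mul _ ((isUnit_iff_isUnit_det M).1 hM.isUnit), one_mulVec]
  have hp : ContDiff ℝ 1 (gaussDensity M ρ) := contDiff_gaussDensity M ρ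
  have hint : ∀ w : (Fin N → ℝ) → Fin N → ℝ, Continuous w →
      Integrable fun u => (g u ⬝ᵥ w u) * gaussDensity M ρ u := fun w hw =>
    ((hg.continuous.dotProduct hw).mul hp.continuous).integrable_of_hasCompactSupport
      (hgsupp.mono (Function.support_subset_iff'.2 fun u hu => by
        simp [Function.notMem_support.1 hu])).mul_right
  have hdiv : ∫ u, divergence g u * gaussDensity M ρ u
      = ∫ u, (g u ⬝ᵥ M⁻¹ *ᵥ u) * gaussDensity M ρ u - (g u ⬝ᵥ ρ) * gaussDensity M ρ u := by
    rw [integral_divergence_mul_eq_neg hg hgsupp hp, ← integral_neg]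
    congr 1 with u
    simp only [hMsymm.fderiv_gaussDensity_single, mulVec_sub, hMρ, dotProduct, Finset.sum_mul,
      ← Finset.sum_sub_distrib, ← Finset.sum_neg_distrib, Pi.sub_apply]
    exact Finset.sum_congr rfl fun i _ => by ring
  rw [hdiv, integral_sub (hint (M⁻¹ *ᵥ ·) (continuous_const.matrix_mulVec continuous_id))
    (hint _ continuous_const), sub_sub_cancel]

/-- **Generalized Stein identity (ENSURE paper, appendix, nondegenerate case).**
Let `M` be symmetric positive definite, `ρ ∈ ℝ^N`, and `p` the Gaussian density with mean
`M ρ` and covariance `M`.  For every continuously differentiable, compactly supported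
`g : ℝ^N → ℝ^N`:
`∫ ⟨g(u), ρ⟩ p(u) du = ∫ ⟨g(u), M⁻¹ u⟩ p(u) du − ∫ (div g)(u) p(u) du`. -/
theorem generalized_stein_identity
    {N : ℕ} (hN : 0 < N)
    (M : Matrix (Fin N) (Fin N) ℝ) (hM : M.PosDef)
    (ρ : Fin N → ℝ)
    (g : (Fin N → ℝ) → (Fin N → ℝ))
    (hg : ContDiff ℝ 1 g) (hgsupp : HasCompactSupport g) :
    ∫ u, (g u ⬝ᵥ ρ) * gaussDensity M ρ u
      = (∫ u, (g u ⬝ᵥ M⁻¹.mulVec u) * gaussDensity M ρ u)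
        - ∫ u, divergence g u * gaussDensity M ρ u :=
  generalized_stein_identity_general M hM ρ g hg hgsupp
end

section
/- Let m, n be positive integers and A ∈ Matrix (Fin m) (Fin n) ℂ. For λ > 0 the matrix AᴴA + λI is invertible. Then for every e ∈ ℂ^n, as λ → 0⁺ the vector (AᴴA + λ I)⁻¹ (AᴴA) e converges to the orthogonal projection of e onto the range of Aᴴ (equivalently, the range of AᴴA), the orthogonal projection being taken in the Euclidean inner-product space ℂ^n. -/
/-!
Put `B = AᴴA`, a positive operator. Expanding `‖(B + λ)v‖²` as
`‖Bv‖² + 2λ Re⟪Bv, v⟫ + λ²‖v‖²` bounds both `‖Bv‖` and `λ‖v‖` by `‖(B + λ)v‖`, so `B + λ` is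
invertible for `λ > 0`. The projection `p` of `e` onto `range Aᴴ = range B` satisfies `Bp = Be`
(since `e - p ∈ (range Aᴴ)ᗮ = ker A`) and `p = Bx`. If `(B + λ)w = Be` and `(B + λ)u = x`, then
`w - p = -λ Bu`, whence `‖w - p‖ ≤ λ‖(B + λ)u‖ = λ‖x‖ → 0`.
-/

open Matrix Filter Topology LinearMap

namespace LinearMap.IsPositive

variable {𝕜 E : Type*} [RCLike 𝕜] [NormedAddCommGroup E] [InnerProductSpace 𝕜 E]
  {B : E →ₗ[𝕜] E} {l : ℝ}

theorem sq_norm_add_sq_mul_norm_le (hB : B.IsPositive) (hl : 0 ≤ l) (v : E) :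
    ‖B v‖ ^ 2 + (l * ‖v‖) ^ 2 ≤ ‖B v + (l : 𝕜) • v‖ ^ 2 := by
  have hcross : 0 ≤ RCLike.re (inner 𝕜 (B v) ((l : 𝕜) • v)) := by
    rw [inner_smul_right, RCLike.re_ofReal_mul]
    exact mul_nonneg hl (hB.re_inner_nonneg_left v)
  rw [norm_add_sq (𝕜 := 𝕜), norm_smul, RCLike.norm_ofReal, abs_of_nonneg hl]
  linarith

theorem norm_apply_le_norm_apply_add_smul (hB : B.IsPositive) (hl : 0 ≤ l) (v : E) :
    ‖B v‖ ≤ ‖B v + (l : 𝕜) • v‖ :=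
  pow_le_pow_iff_left₀ (norm_nonneg _) (norm_nonneg _) two_ne_zero |>.mp <| by
    nlinarith [hB.sq_norm_add_sq_mul_norm_le hl v]

theorem mul_norm_le_norm_apply_add_smul (hB : B.IsPositive) (hl : 0 ≤ l) (v : E) :
    l * ‖v‖ ≤ ‖B v + (l : 𝕜) • v‖ :=
  pow_le_pow_iff_left₀ (by positivity) (norm_nonneg _) two_ne_zero |>.mp <| by
    nlinarith [hB.sq_norm_add_sq_mul_norm_le hl v]

variable [FiniteDimensional 𝕜 E]

theorem isUnit_add_smul_one (hB : B.IsPositive) (hl : 0 < l) : IsUnit (B + (l : 𝕜) • 1) := by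
  have hinj : Function.Injective ⇑(B + (l : 𝕜) • 1) := by
    refine (injective_iff_map_eq_zero _).mpr fun v hv => norm_eq_zero.mp ?_
    have := hB.mul_norm_le_norm_apply_add_smul hl.le v
    rw [show B v + (l : 𝕜) • v = 0 from hv, norm_zero] at this
    nlinarith [norm_nonneg v]
  exact (Module.End.isUnit_iff _).mpr ⟨hinj, injective_iff_surjective.mp hinj⟩

theorem norm_sub_apply_le_mul_norm (hB : B.IsPositive) (hl : 0 < l) {w x : E}
    (hw : B w + (l : 𝕜) • w = B (B x)) : ‖w - B x‖ ≤ l * ‖x‖ := by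
  obtain ⟨hinj, hsurj⟩ := (Module.End.isUnit_iff _).mp (hB.isUnit_add_smul_one hl)
  obtain ⟨u, rfl⟩ := hsurj x
  change ‖w - B (B u + (l : 𝕜) • u)‖ ≤ l * ‖B u + (l : 𝕜) • u‖
  have hdiff : w - B (B u + (l : 𝕜) • u) = -((l : 𝕜) • B u) := by
    apply hinj
    simp only [add_apply, smul_apply, Module.End.one_apply, map_sub, map_add, map_neg, map_smul]
    simp only [add_apply, smul_apply, Module.End.one_apply, map_add, map_smul] at hw
    linear_combination (norm := module) hw
  rw [hdiff, norm_neg, norm_smul, RCLike.norm_ofReal, abs_of_pos hl]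
  exact mul_le_mul_of_nonneg_left (hB.norm_apply_le_norm_apply_add_smul hl.le u) hl.le

end LinearMap.IsPositive

namespace LinearMap

variable {𝕜 E F : Type*} [RCLike 𝕜] [NormedAddCommGroup E] [InnerProductSpace 𝕜 E]
  [NormedAddCommGroup F] [InnerProductSpace 𝕜 F] [FiniteDimensional 𝕜 E] [FiniteDimensional 𝕜 F]

theorem tendsto_orthogonalProjectionOnto_range_adjoint (T : E →ₗ[𝕜] F) {w : ℝ → E} {e : E}
    (hw : ∀ l > 0, T.adjoint (T (w l)) + (l : 𝕜) • w l = T.adjoint (T e)) :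
    Tendsto w (𝓝[>] 0) (𝓝 (T.adjoint.range.orthogonalProjectionOnto e : E)) := by
  set p : E := ↑(T.adjoint.range.orthogonalProjectionOnto e)
  obtain ⟨x, hx⟩ : p ∈ (T.adjoint ∘ₗ T).range :=
    T.range_adjoint_comp_self ▸ Submodule.coe_mem _
  have hTe : T e = T p := by
    have hker : e - p ∈ T.ker := by
      rw [← adjoint_adjoint T, ← orthogonal_range]
      exact T.adjoint.range.sub_starProjection_mem_orthogonal e
    rwa [mem_ker, map_sub, sub_eq_zero] at hker
  rw [tendsto_iff_norm_sub_tendsto_zero]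
  refine squeeze_zero' (.of_forall fun _ => norm_nonneg _) ?_ (g := fun l => l * ‖x‖) ?_
  · filter_upwards [self_mem_nhdsWithin] with l hl
    rw [← hx]
    exact T.isPositive_adjoint_comp_self.norm_sub_apply_le_mul_norm hl
      (by simp only [comp_apply, hw l hl, hTe, ← hx])
  · simpa using tendsto_nhdsWithin_of_tendsto_nhds ((continuous_mul_const ‖x‖).tendsto 0)

end LinearMap

theorem tikhonov_tendsto_orthogonalProjection_general
    {m n : ℕ} (A : Matrix (Fin m) (Fin n) ℂ) :
    (∀ l : ℝ, 0 < l →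
        IsUnit (Aᴴ * A + (l : ℂ) • (1 : Matrix (Fin n) (Fin n) ℂ))) ∧
    ∀ e : EuclideanSpace ℂ (Fin n),
      Tendsto
        (fun l : ℝ =>
          Matrix.toEuclideanLin
            ((Aᴴ * A + (l : ℂ) • (1 : Matrix (Fin n) (Fin n) ℂ))⁻¹ * (Aᴴ * A)) e)
        (nhdsWithin 0 (Set.Ioi 0))
        (nhds
          ((Submodule.orthogonalProjectionOnto (LinearMap.range (Matrix.toEuclideanLin Aᴴ)) e :
              EuclideanSpace ℂ (Fin n)))) := by
  set T := toEuclideanLin A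
  have hT : toEuclideanLin (Aᴴ * A) = T.adjoint ∘ₗ T := by
    rw [← toEuclideanLin_conjTranspose_eq_adjoint, ← toLpLin_mul_same]
  have hM (l : ℝ) : toEuclideanLin (Aᴴ * A + (l : ℂ) • 1) = T.adjoint ∘ₗ T + (l : ℂ) • 1 := by
    rw [map_add, map_smul, toLpLin_one, hT]
    rfl
  have hunit (l : ℝ) (hl : 0 < l) : IsUnit (Aᴴ * A + (l : ℂ) • 1) :=
    (isUnit_map_iff (toLpLinAlgEquiv 2) _).mp
      (hM l ▸ T.isPositive_adjoint_comp_self.isUnit_add_smul_one hl)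
  refine ⟨hunit, fun e => ?_⟩
  rw [toEuclideanLin_conjTranspose_eq_adjoint]
  refine T.tendsto_orthogonalProjectionOnto_range_adjoint fun l hl => ?_
  set M := Aᴴ * A + (l : ℂ) • 1
  calc _ = toEuclideanLin M (toEuclideanLin (M⁻¹ * (Aᴴ * A)) e) := by rw [hM]; rfl
    _ = toEuclideanLin (M * (M⁻¹ * (Aᴴ * A))) e := by rw [toLpLin_mul_same _ M]; rfl
    _ = T.adjoint (T e) := by
      rw [mul_nonsing_inv_cancel_left _ _ ((isUnit_iff_isUnit_det M).mp (hunit l hl)), hT]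
      rfl

/-- **Tikhonov regularization converges to the orthogonal projection (ENSURE data term).**
Let `A` be an `m × n` complex matrix.  For every `λ > 0` the matrix `AᴴA + λI` is
invertible, and for every `e ∈ ℂ^n`, as `λ → 0⁺` the vector `(AᴴA + λI)⁻¹ (AᴴA) e`
converges to the orthogonal projection of `e` onto the range of `Aᴴ` in the Euclidean
inner-product space `ℂ^n`. -/
theorem tikhonov_tendsto_orthogonalProjection
    {m n : ℕ} (hm : 0 < m) (hn : 0 < n)
    (A : Matrix (Fin m) (Fin n) ℂ) :
    (∀ l : ℝ, 0 < l →
        IsUnit (Aᴴ * A + (l : ℂ) • (1 : Matrix (Fin n) (Fin n) ℂ))) ∧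
    ∀ e : EuclideanSpace ℂ (Fin n),
      Tendsto
        (fun l : ℝ =>
          Matrix.toEuclideanLin
            ((Aᴴ * A + (l : ℂ) • (1 : Matrix (Fin n) (Fin n) ℂ))⁻¹ * (Aᴴ * A)) e)
        (nhdsWithin 0 (Set.Ioi 0))
        (nhds
          ((Submodule.orthogonalProjectionOnto (LinearMap.range (Matrix.toEuclideanLin Aᴴ)) e :
              EuclideanSpace ℂ (Fin n)))) :=
  tikhonov_tendsto_orthogonalProjection_general A
end
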